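/- arXiv:2604.14031 — 15 statements merged into one kernel-verified Lean document; each statement's English description precedes it below -/
import Mathlib

section
/- For each plot (𝕊, σ, S), the lifted operators on the frame O(S) of open sets satisfy: □_σ(S) = S; ◇_σ(∅) = ∅; □_σ(U ∩ V) = □_σ(U) ∩ □_σ(V) for all opens U, V; ◇_σ is monotone; □_σ(U) ∩ ◇_σ(V) ⊆ ◇_σ(U ∩ V) for all opens U, V; and moreover σ⁻¹(□_σ(U)) ⊆ □_𝕊(σ⁻¹(U)) and σ⁻¹(◇_σ(U)) ⊆ ◇_𝕊(σ⁻¹(U)) for every open U. (That is, O(S) with □_σ, ◇_σ is a bed and the inverse-image map σ⁻¹ is a bed morphism; the surjectivity of σ is used for ◇_σ(∅) = ∅.) -/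
open Set

namespace Paper

/-- The box operator induced by a transition relation: `box r E = {P | P^→ ⊆ E}`. -/
def box {X : Type*} (r : X → X → Prop) (E : Set X) : Set X :=
  {P | ∀ Q, r P Q → Q ∈ E}

/-- The diamond operator induced by a transition relation: `dia r E = {P | P^→ meets E}`. -/
def dia {X : Type*} (r : X → X → Prop) (E : Set X) : Set X :=
  {P | ∃ Q, r P Q ∧ Q ∈ E}

/-- The lifted box operator on opens of `S` along a valuation `σ`. -/
def liftBox {X S : Type*} [TopologicalSpace S] (r : X → X → Prop) (σ : X → S)
    (U : Set S) : Set S :=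
  ⋃₀ {V | IsOpen V ∧ σ ⁻¹' V ⊆ box r (σ ⁻¹' U)}

/-- The lifted diamond operator on opens of `S` along a valuation `σ`. -/
def liftDia {X S : Type*} [TopologicalSpace S] (r : X → X → Prop) (σ : X → S)
    (U : Set S) : Set S :=
  ⋃₀ {V | IsOpen V ∧ σ ⁻¹' V ⊆ dia r (σ ⁻¹' U)}

/-- For each plot `(𝕊, σ, S)` the lifted operators turn `O(S)` into a bed and the
inverse-image map `σ⁻¹` is a bed morphism (surjectivity of `σ` is used for
`◇_σ(∅) = ∅`). -/
theorem lifted_operators_form_bed {X S : Type*} [TopologicalSpace S]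
    (r : X → X → Prop) (σ : X → S) (hσ : Function.Surjective σ) :
    liftBox r σ Set.univ = Set.univ ∧
    liftDia r σ (∅ : Set S) = ∅ ∧
    (∀ U V : Set S, IsOpen U → IsOpen V →
      liftBox r σ (U ∩ V) = liftBox r σ U ∩ liftBox r σ V) ∧
    (∀ U V : Set S, IsOpen U → IsOpen V → U ⊆ V → liftDia r σ U ⊆ liftDia r σ V) ∧
    (∀ U V : Set S, IsOpen U → IsOpen V →
      liftBox r σ U ∩ liftDia r σ V ⊆ liftDia r σ (U ∩ V)) ∧
    (∀ U : Set S, IsOpen U → σ ⁻¹' (liftBox r σ U) ⊆ box r (σ ⁻¹' U)) ∧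
    (∀ U : Set S, IsOpen U → σ ⁻¹' (liftDia r σ U) ⊆ dia r (σ ⁻¹' U)) := by
  refine ⟨?_, ?_, ?_, ?_, ?_, ?_, ?_⟩
  · apply Set.eq_univ_of_univ_subset
    intro s _
    exact ⟨Set.univ, ⟨isOpen_univ, fun x _ Q _ => trivial⟩, trivial⟩
  · ext s
    simp only [liftDia, Set.mem_sUnion, Set.mem_setOf_eq]
    constructor
    · rintro ⟨V, ⟨_, hV⟩, hs⟩
      obtain ⟨x, hx⟩ := hσ s
      obtain ⟨Q, _, hQ⟩ := hV (show σ x ∈ V from hx ▸ hs)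
      exact absurd hQ (Set.notMem_empty _)
    · exact fun h => absurd h (Set.notMem_empty _)
  · intro U V _ _
    ext s
    simp only [liftBox, Set.mem_sUnion, Set.mem_setOf_eq, Set.mem_inter_iff]
    constructor
    · rintro ⟨W, ⟨hWo, hW⟩, hs⟩
      exact ⟨⟨W, ⟨hWo, fun x hx Q hQ => (hW hx Q hQ).1⟩, hs⟩,
             ⟨W, ⟨hWo, fun x hx Q hQ => (hW hx Q hQ).2⟩, hs⟩⟩
    · rintro ⟨⟨W1, ⟨hW1o, hW1⟩, hs1⟩, ⟨W2, ⟨hW2o, hW2⟩, hs2⟩⟩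
      exact ⟨W1 ∩ W2, ⟨hW1o.inter hW2o,
        fun x hx Q hQ => ⟨hW1 hx.1 Q hQ, hW2 hx.2 Q hQ⟩⟩, hs1, hs2⟩
  · intro U V _ _ hUV s hs
    obtain ⟨W, ⟨hWo, hW⟩, hsW⟩ := hs
    exact ⟨W, ⟨hWo, fun x hx => by
      obtain ⟨Q, hr, hQ⟩ := hW hx
      exact ⟨Q, hr, hUV hQ⟩⟩, hsW⟩
  · intro U V _ _ s hs
    obtain ⟨⟨W1, ⟨hW1o, hW1⟩, hs1⟩, ⟨W2, ⟨hW2o, hW2⟩, hs2⟩⟩ := hs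
    refine ⟨W1 ∩ W2, ⟨hW1o.inter hW2o, fun x hx => ?_⟩, hs1, hs2⟩
    obtain ⟨Q, hr, hQ⟩ := hW2 hx.2
    exact ⟨Q, hr, hW1 hx.1 Q hr, hQ⟩
  · intro U _ x hx
    obtain ⟨W, ⟨_, hW⟩, hxW⟩ := hx
    exact hW hxW
  · intro U _ x hx
    obtain ⟨W, ⟨_, hW⟩, hxW⟩ := hx
    exact hW hxW
end Paper
end

section
/- Let (φ, Φ) be a plot map from a plot (𝕊, σ, S) to a plot (𝕋, τ, T). Then φ⁻¹(□_τ(W)) ⊆ □_σ(φ⁻¹(W)) for every open W ⊆ T. -/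
open Set

namespace Paper

/-- For any plot map `(φ, Φ)` we have `φ⁻¹(□_τ(W)) ⊆ □_σ(φ⁻¹(W))` for every open `W`. -/
theorem preimage_liftBox_subset {X Y S T : Type*} [TopologicalSpace S] [TopologicalSpace T]
    (rS : X → X → Prop) (rT : Y → Y → Prop)
    (σ : X → S) (τ : Y → T)
    (hσ : Function.Surjective σ) (hτ : Function.Surjective τ)
    (Φ : X → Y) (φ : S → T) (hφ : Continuous φ)
    (hΦ : ∀ P Q, rS P Q → rT (Φ P) (Φ Q))
    (hcomm : ∀ P, φ (σ P) = τ (Φ P)) :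
    ∀ W : Set T, IsOpen W →
      φ ⁻¹' (liftBox rT τ W) ⊆ liftBox rS σ (φ ⁻¹' W) := by
  intro W _ s hs
  obtain ⟨V, ⟨hVopen, hVbox⟩, hsV⟩ := hs
  refine ⟨φ ⁻¹' V, ⟨hVopen.preimage hφ, ?_⟩, hsV⟩
  intro P hP Q hQ
  have : Φ P ∈ box rT (τ ⁻¹' W) := hVbox (by simpa [hcomm P] using hP)
  have hW : τ (Φ Q) ∈ W := this (Φ Q) (hΦ P Q hQ)
  simpa [mem_preimage, hcomm Q] using hW

end Paper
end

section
/- Let (φ, Φ) be a plot map from a plot (𝕊, σ, S) to a plot (𝕋, τ, T) which satisfies the (−)-condition. Then φ⁻¹(◇_τ(W)) ⊆ ◇_σ(φ⁻¹(W)) for every open W ⊆ T. -/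
open Set

namespace Paper

/-- For a plot map `(φ, Φ)` satisfying the `(−)`-condition we have
`φ⁻¹(◇_τ(W)) ⊆ ◇_σ(φ⁻¹(W))` for every open `W`. -/
theorem preimage_liftDia_subset {X Y S T : Type*} [TopologicalSpace S] [TopologicalSpace T]
    (rS : X → X → Prop) (rT : Y → Y → Prop)
    (σ : X → S) (τ : Y → T)
    (hσ : Function.Surjective σ) (hτ : Function.Surjective τ)
    (Φ : X → Y) (φ : S → T) (hφ : Continuous φ)
    (hΦ : ∀ P Q, rS P Q → rT (Φ P) (Φ Q))
    (hcomm : ∀ P, φ (σ P) = τ (Φ P))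
    (hminus : ∀ P R, rT (Φ P) R → ∀ V : Set T, IsOpen V → τ R ∈ V →
      ∃ Q, rS P Q ∧ φ (σ Q) ∈ V) :
    ∀ W : Set T, IsOpen W →
      φ ⁻¹' (liftDia rT τ W) ⊆ liftDia rS σ (φ ⁻¹' W) := by
  intro W hW s hs
  obtain ⟨V, ⟨hVopen, hVsub⟩, hsV⟩ := hs
  refine ⟨φ ⁻¹' V, ⟨hVopen.preimage hφ, ?_⟩, hsV⟩
  intro P hP
  have : Φ P ∈ dia rT (τ ⁻¹' W) := hVsub (by simpa [hcomm P] using hP)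
  obtain ⟨R, hR, hRW⟩ := this
  obtain ⟨Q, hQ, hQW⟩ := hminus P R hR W hW hRW
  exact ⟨Q, hQ, hQW⟩

end Paper
end

section
/- Let (φ, f) be a garden morphism from a garden (B, β, T) to a garden (A, α, S), and let (p, a, F) be a flower of (A, α, S). Then (φ(p), f_*(a), f⁻¹(F)) is a flower of (B, β, T); that is, f_*(a) ∈ P◇_B(φ(p)) and P□_B(φ(p)) ⊆ f⁻¹(F), where f_* is the right adjoint of f. -/
open Set TopologicalSpace

namespace Paper

/-- A filter of a frame: a nonempty upward-closed subset closed under binary meets. -/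
def IsFrameFilter {A : Type*} [Order.Frame A] (F : Set A) : Prop :=
  F.Nonempty ∧ (∀ x ∈ F, ∀ y, x ≤ y → y ∈ F) ∧ ∀ x ∈ F, ∀ y ∈ F, x ⊓ y ∈ F

/-- A bed structure: a `□`-operator together with a companion `◇`-operator. -/
def IsBed {A : Type*} [Order.Frame A] (bx dm : A → A) : Prop :=
  Monotone bx ∧ bx ⊤ = ⊤ ∧ (∀ x y, bx (x ⊓ y) = bx x ⊓ bx y) ∧
  Monotone dm ∧ ∀ x y, bx x ⊓ dm y ≤ dm (x ⊓ y)

variable {A : Type*} [Order.Frame A] {S : Type*} [TopologicalSpace S]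

/-- `∇(p) = {x | p ∈ α(x)}`. -/
def Nabla (α : FrameHom A (Opens S)) (p : S) : Set A := {x | p ∈ α x}

/-- `P□(p) = {x | □(x) ∈ ∇(p)}`. -/
def PBox (bx : A → A) (α : FrameHom A (Opens S)) (p : S) : Set A :=
  {x | p ∈ α (bx x)}

/-- `P◇(p) = {x | ◇(x) ∉ ∇(p)}`. -/
def PDia (dm : A → A) (α : FrameHom A (Opens S)) (p : S) : Set A :=
  {x | p ∉ α (dm x)}

/-- A flower of a garden: a triple `(p, a, F)` with `F` a filter, `a ∈ P◇(p)` and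
`P□(p) ⊆ F`. -/
def IsFlower (bx dm : A → A) (α : FrameHom A (Opens S)) (P : S × A × Set A) : Prop :=
  IsFrameFilter P.2.2 ∧ P.2.1 ∈ PDia dm α P.1 ∧ PBox bx α P.1 ⊆ P.2.2

/-- The transition relation on flowers: `(p,a,F) → (q,b,G)` iff `a ∉ ∇(q)` and
`F ⊆ ∇(q)`. -/
def FTrans (α : FrameHom A (Opens S)) (P Q : S × A × Set A) : Prop :=
  P.2.1 ∉ Nabla α Q.1 ∧ P.2.2 ⊆ Nabla α Q.1

/-- A healthy set of flowers. -/
def Healthy (bx dm : A → A) (α : FrameHom A (Opens S)) (H : Set (S × A × Set A)) : Prop :=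
  (∀ P ∈ H, IsFlower bx dm α P) ∧
  (∀ P ∈ H, ∀ x, x ∉ P.2.2 → ∃ Q ∈ H, FTrans α P Q ∧ x ∉ Nabla α Q.1) ∧
  (∀ P ∈ H, ∀ x, ¬ x ≤ P.2.1 → ∃ Q ∈ H, FTrans α P Q ∧ x ∈ Nabla α Q.1)

/-- The largest healthy set of flowers: the union of all healthy sets. -/
def MaxHealthy (bx dm : A → A) (α : FrameHom A (Opens S)) : Set (S × A × Set A) :=
  ⋃₀ {H | Healthy bx dm α H}

/-- The right adjoint of a frame homomorphism. -/
def rAdj {B : Type*} [Order.Frame B] (f : FrameHom B A) (a : A) : B :=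
  sSup {b | f b ≤ a}

/-- The right adjoint of a covering morphism `α : A → O(S)`. -/
def rAdjO (α : FrameHom A (Opens S)) (U : Opens S) : A :=
  sSup {x | α x ≤ U}

/-- A garden morphism `(φ, f)` sends each flower `(p, a, F)` of `(A, α, S)` to the
flower `(φ(p), f_*(a), f⁻¹(F))` of `(B, β, T)`. -/
theorem garden_morphism_flower {A B S T : Type*} [Order.Frame A] [Order.Frame B]
    [TopologicalSpace S] [TopologicalSpace T]
    (bxA dmA : A → A) (bxB dmB : B → B)
    (hbedA : IsBed bxA dmA) (hbedB : IsBed bxB dmB)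
    (α : FrameHom A (Opens S)) (β : FrameHom B (Opens T))
    (hα : Function.Surjective α) (hβ : Function.Surjective β)
    (φ : S → T) (f : FrameHom B A) (hφ : Continuous φ)
    (hfbox : ∀ b, f (bxB b) ≤ bxA (f b)) (hfdia : ∀ b, f (dmB b) ≤ dmA (f b))
    (hcomm : ∀ b, φ ⁻¹' ((β b : Set T)) = ((α (f b)) : Set S))
    (p : S) (a : A) (F : Set A)
    (hflower : IsFlower bxA dmA α (p, a, F)) :
    IsFlower bxB dmB β (φ p, rAdj f a, f ⁻¹' F) := by
  obtain ⟨⟨hFne, hFup, hFmeet⟩, hdia, hbox⟩ := hflower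
  have hadj : f (rAdj f a) ≤ a := by
    rw [rAdj, map_sSup]
    exact sSup_le (by rintro x ⟨b, hb, rfl⟩; exact hb)
  refine ⟨⟨?_, ?_, ?_⟩, ?_, ?_⟩
  · obtain ⟨x, hx⟩ := hFne
    exact ⟨⊤, show f ⊤ ∈ F by rw [map_top]; exact hFup x hx ⊤ le_top⟩
  · intro x hx y hxy
    exact hFup (f x) hx (f y) (OrderHomClass.mono f hxy)
  · intro x hx y hy
    simpa [map_inf] using hFmeet (f x) hx (f y) hy
  · intro hmem
    apply hdia
    have h1 : p ∈ (α (f (dmB (rAdj f a))) : Set S) := by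
      rw [← hcomm]; exact hmem
    have h2 : f (dmB (rAdj f a)) ≤ dmA a :=
      (hfdia _).trans (hbedA.2.2.2.1 hadj)
    exact (OrderHomClass.mono α h2 : α _ ≤ α _) h1
  · intro b hb
    have h1 : p ∈ (α (f (bxB b)) : Set S) := by rw [← hcomm]; exact hb
    have h2 : f (bxB b) ≤ bxA (f b) := hfbox b
    exact hbox ((OrderHomClass.mono α h2 : α _ ≤ α _) h1)
end Paper
end

section
/- Let (φ, f) be a garden morphism from a garden (B, β, T) to a garden (A, α, S). If (p, a, F) → (q, b, G) is a transition of flowers of (A, α, S), then (φ(p), f_*(a), f⁻¹(F)) → (φ(q), f_*(b), f⁻¹(G)) is a transition of flowers of (B, β, T), where f_* is the right adjoint of f. -/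
open Set TopologicalSpace

namespace Paper

variable {A : Type*} [Order.Frame A] {S : Type*} [TopologicalSpace S]

/-- A garden morphism `(φ, f)` sends transitions of flowers of `(A, α, S)` to
transitions of the corresponding flowers of `(B, β, T)`. -/
theorem garden_morphism_trans {A B S T : Type*} [Order.Frame A] [Order.Frame B]
    [TopologicalSpace S] [TopologicalSpace T]
    (bxA dmA : A → A) (bxB dmB : B → B)
    (hbedA : IsBed bxA dmA) (hbedB : IsBed bxB dmB)
    (α : FrameHom A (Opens S)) (β : FrameHom B (Opens T))
    (hα : Function.Surjective α) (hβ : Function.Surjective β)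
    (φ : S → T) (f : FrameHom B A) (hφ : Continuous φ)
    (hfbox : ∀ b, f (bxB b) ≤ bxA (f b)) (hfdia : ∀ b, f (dmB b) ≤ dmA (f b))
    (hcomm : ∀ b, φ ⁻¹' ((β b : Set T)) = ((α (f b)) : Set S))
    (p q : S) (a b : A) (F G : Set A)
    (hP : IsFlower bxA dmA α (p, a, F)) (hQ : IsFlower bxA dmA α (q, b, G))
    (htrans : FTrans α (p, a, F) (q, b, G)) :
    FTrans β (φ p, rAdj f a, f ⁻¹' F) (φ q, rAdj f b, f ⁻¹' G) := by
  have key : ∀ (x : B) (s : S), φ s ∈ β x ↔ s ∈ α (f x) := by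
    intro x s
    constructor
    · intro h; have := (hcomm x).le; exact this h
    · intro h; have := (hcomm x).ge; exact this h
  constructor
  · -- rAdj f a ∉ Nabla β (φ q)
    intro h
    have h1 : q ∈ α (f (rAdj f a)) := (key _ q).1 h
    have h2 : f (rAdj f a) ≤ a := by
      rw [rAdj, map_sSup]
      apply sSup_le
      rintro _ ⟨y, hy, rfl⟩
      exact hy
    exact htrans.1 (OrderHomClass.mono α h2 h1)
  · intro x hx
    exact (key x q).2 (htrans.2 hx)

end Paper
end

section
/- Let (φ, f) be a garden morphism from a garden (B, β, T) to a garden (A, α, S), and let Ψ(p, a, F) = (φ(p), f_*(a), f⁻¹(F)) where f_* is the right adjoint of f. If H is a healthy set of flowers of (A, α, S), then the image Ψ[H] is a healthy set of flowers of (B, β, T). -/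
open Set TopologicalSpace

namespace Paper

variable {A : Type*} [Order.Frame A] {S : Type*} [TopologicalSpace S]

/-- A garden morphism `(φ, f)` sends each healthy set of flowers of `(A, α, S)` to a
healthy set of flowers of `(B, β, T)` via `Ψ(p,a,F) = (φ(p), f_*(a), f⁻¹(F))`. -/
theorem garden_morphism_healthy {A B S T : Type*} [Order.Frame A] [Order.Frame B]
    [TopologicalSpace S] [TopologicalSpace T]
    (bxA dmA : A → A) (bxB dmB : B → B)
    (hbedA : IsBed bxA dmA) (hbedB : IsBed bxB dmB)
    (α : FrameHom A (Opens S)) (β : FrameHom B (Opens T))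
    (hα : Function.Surjective α) (hβ : Function.Surjective β)
    (φ : S → T) (f : FrameHom B A) (hφ : Continuous φ)
    (hfbox : ∀ b, f (bxB b) ≤ bxA (f b)) (hfdia : ∀ b, f (dmB b) ≤ dmA (f b))
    (hcomm : ∀ b, φ ⁻¹' ((β b : Set T)) = ((α (f b)) : Set S))
    (H : Set (S × A × Set A)) (hH : Healthy bxA dmA α H) :
    Healthy bxB dmB β
      ((fun P : S × A × Set A => (φ P.1, rAdj f P.2.1, f ⁻¹' P.2.2)) '' H) := by
  obtain ⟨hflow, hup, hminus⟩ := hH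
  obtain ⟨hbxAm, -, -, hdmAm, -⟩ := hbedA
  have hmem : ∀ (b : B) (q : S), q ∈ α (f b) ↔ φ q ∈ β b := by
    intro b q
    exact (Set.ext_iff.mp (hcomm b) q).symm
  have hadj : ∀ (x : B) (a : A), f x ≤ a ↔ x ≤ rAdj f a := by
    intro x a
    constructor
    · intro h; exact le_sSup h
    · intro h
      calc f x ≤ f (rAdj f a) := OrderHomClass.mono f h
        _ ≤ a := by
          rw [rAdj, map_sSup]
          exact sSup_le (by rintro _ ⟨b, hb, rfl⟩; exact hb)
  have hffa : ∀ a : A, f (rAdj f a) ≤ a := fun a => (hadj _ _).mpr le_rfl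
  have hαmono : ∀ {x y : A} {q : S}, x ≤ y → q ∈ α x → q ∈ α y := by
    intro x y q h hq
    exact (OrderHomClass.mono α h) hq
  -- transition lemma
  have htrans : ∀ P ∈ H, ∀ Q ∈ H, FTrans α P Q →
      FTrans β (φ P.1, rAdj f P.2.1, f ⁻¹' P.2.2) (φ Q.1, rAdj f Q.2.1, f ⁻¹' Q.2.2) := by
    rintro P hP Q hQ ⟨hna, hsub⟩
    constructor
    · intro hmem'
      exact hna (hαmono (hffa P.2.1) ((hmem _ _).mpr hmem'))
    · intro b hb
      exact (hmem b Q.1).mp (hsub hb)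
  refine ⟨?_, ?_, ?_⟩
  · rintro _ ⟨P, hP, rfl⟩
    obtain ⟨⟨⟨x0, hx0⟩, hupcl, hmeet⟩, hdia, hbox⟩ := hflow P hP
    have htopF : (⊤ : A) ∈ P.2.2 := hupcl x0 hx0 ⊤ le_top
    refine ⟨⟨⟨⊤, ?_⟩, ?_, ?_⟩, ?_, ?_⟩
    · show f ⊤ ∈ P.2.2
      rw [map_top]; exact htopF
    · intro x hx y hxy
      exact hupcl (f x) hx (f y) (OrderHomClass.mono f hxy)
    · intro x hx y hy
      show f (x ⊓ y) ∈ P.2.2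
      rw [map_inf]; exact hmeet (f x) hx (f y) hy
    · -- PDia
      intro hc
      exact hdia (hαmono (le_trans (hfdia _) (hdmAm (hffa P.2.1))) ((hmem _ _).mpr hc))
    · -- PBox
      intro b hb
      exact hbox (hαmono (hfbox b) ((hmem _ _).mpr hb))
  · rintro _ ⟨P, hP, rfl⟩ x hx
    obtain ⟨Q, hQ, ht, hxn⟩ := hup P hP (f x) hx
    exact ⟨(φ Q.1, rAdj f Q.2.1, f ⁻¹' Q.2.2), ⟨Q, hQ, rfl⟩, htrans P hP Q hQ ht,
      fun h => hxn ((hmem x Q.1).mpr h)⟩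
  · rintro _ ⟨P, hP, rfl⟩ x hx
    have hfx : ¬ f x ≤ P.2.1 := fun h => hx ((hadj x P.2.1).mp h)
    obtain ⟨Q, hQ, ht, hxn⟩ := hminus P hP (f x) hfx
    exact ⟨(φ Q.1, rAdj f Q.2.1, f ⁻¹' Q.2.2), ⟨Q, hQ, rfl⟩, htrans P hP Q hQ ht,
      (hmem x Q.1).mp hxn⟩
end Paper
end

section
/- Let (φ, f) be a garden morphism from a garden (B, β, T) to a garden (A, α, S), let 𝕊_A and 𝕊_B be the largest healthy sets of flowers of (A, α, S) and (B, β, T) respectively, and let Ψ(p, a, F) = (φ(p), f_*(a), f⁻¹(F)) where f_* is the right adjoint of f. Then for every (p, a, F) ∈ 𝕊_A: (↑) for every transition Ψ(p, a, F) → (r, c, H) with (r, c, H) ∈ 𝕊_B, there is a transition (p, a, F) → (q, b, G) with (q, b, G) ∈ 𝕊_A and φ(q) ≼ r in the specialization preorder of T; and (−) for every such transition Ψ(p, a, F) → (r, c, H) and every open V ⊆ T with r ∈ V, there is a transition (p, a, F) → (q, b, G) with (q, b, G) ∈ 𝕊_A and φ(q) ∈ V. (The surjectivity of the covering morphism β is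 used.) -/
open Set TopologicalSpace

namespace Paper

variable {A : Type*} [Order.Frame A] {S : Type*} [TopologicalSpace S]

/-- The plot map induced by a garden morphism between the largest healthy sets of
flowers is lentile: it satisfies the `(↑)`- and `(−)`-conditions. -/
theorem induced_plot_map_lentile {A B S T : Type*} [Order.Frame A] [Order.Frame B]
    [TopologicalSpace S] [TopologicalSpace T]
    (bxA dmA : A → A) (bxB dmB : B → B)
    (hbedA : IsBed bxA dmA) (hbedB : IsBed bxB dmB)
    (α : FrameHom A (Opens S)) (β : FrameHom B (Opens T))
    (hα : Function.Surjective α) (hβ : Function.Surjective β)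
    (φ : S → T) (f : FrameHom B A) (hφ : Continuous φ)
    (hfbox : ∀ b, f (bxB b) ≤ bxA (f b)) (hfdia : ∀ b, f (dmB b) ≤ dmA (f b))
    (hcomm : ∀ b, φ ⁻¹' ((β b : Set T)) = ((α (f b)) : Set S)) :
    ∀ P ∈ MaxHealthy bxA dmA α, ∀ R ∈ MaxHealthy bxB dmB β,
      FTrans β (φ P.1, rAdj f P.2.1, f ⁻¹' P.2.2) R →
        (∃ Q ∈ MaxHealthy bxA dmA α, FTrans α P Q ∧ φ Q.1 ∈ closure {R.1}) ∧
        (∀ V : Set T, IsOpen V → R.1 ∈ V →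
          ∃ Q ∈ MaxHealthy bxA dmA α, FTrans α P Q ∧ φ Q.1 ∈ V) := by
  intro P hP R hR hT
  obtain ⟨H, hH, hPH⟩ := hP
  constructor
  · -- (↑) part
    obtain ⟨w, hw⟩ := hβ ⟨(closure {R.1})ᶜ, isClosed_closure.isOpen_compl⟩
    have hfw : f w ∉ P.2.2 := by
      intro hmem
      have : R.1 ∈ β w := hT.2 hmem
      rw [hw] at this
      exact this (subset_closure rfl)
    obtain ⟨Q, hQH, hQT, hQn⟩ := hH.2.1 P hPH (f w) hfw
    refine ⟨Q, ⟨H, hH, hQH⟩, hQT, ?_⟩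
    have : φ Q.1 ∉ (β w : Set T) := by
      intro h
      have h2 : Q.1 ∈ (α (f w) : Set S) := by rw [← hcomm w]; exact h
      exact hQn (SetLike.mem_coe.mp h2)
    rw [hw] at this
    simpa using this
  · -- (−) part
    intro V hV hrV
    obtain ⟨v, hv⟩ := hβ ⟨V, hV⟩
    have hfv : ¬ f v ≤ P.2.1 := by
      intro hle
      have h1 : v ≤ rAdj f P.2.1 := le_sSup hle
      have h2 : (β v : Set T) ⊆ β (rAdj f P.2.1) :=
        SetLike.coe_subset_coe.mpr (OrderHomClass.mono β h1)
      exact hT.1 (h2 (by rw [hv]; exact hrV))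
    obtain ⟨Q, hQH, hQT, hQn⟩ := hH.2.2 P hPH (f v) hfv
    refine ⟨Q, ⟨H, hH, hQH⟩, hQT, ?_⟩
    have h2 : Q.1 ∈ (α (f v) : Set S) := SetLike.mem_coe.mpr hQn
    rw [← hcomm v] at h2
    have : φ Q.1 ∈ (β v : Set T) := h2
    rw [hv] at this
    exact this
end Paper
end

section
/- Let (𝕊, σ, S) be a plot and consider the garden G𝔖 = (O(S), id, S), the frame of open sets with the lifted operators □_σ, ◇_σ and identity covering morphism. For each node P ∈ 𝕊, the triple η(P) = (σ(P), St(P), Bl(P)) is a flower of G𝔖: St(P) ∈ P◇(σ(P)) and P□(σ(P)) ⊆ Bl(P). -/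
open Set

namespace Paper

/-- A filter of the frame `O(S)` of open sets, viewed as a set of open sets. -/
def OFilter {S : Type*} [TopologicalSpace S] (F : Set (Set S)) : Prop :=
  (∀ U ∈ F, IsOpen U) ∧ F.Nonempty ∧
  (∀ U ∈ F, ∀ V, IsOpen V → U ⊆ V → V ∈ F) ∧
  ∀ U ∈ F, ∀ V ∈ F, U ∩ V ∈ F

/-- The stalk of a node: the open complement of the closure of `σ[P^→]`. -/
def St {X S : Type*} [TopologicalSpace S] (r : X → X → Prop) (σ : X → S) (P : X) :
    Set S :=
  (closure (σ '' {Q | r P Q}))ᶜ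

/-- The bloom of a node: the filter of open neighbourhoods of `σ[P^→]`. -/
def Bl {X S : Type*} [TopologicalSpace S] (r : X → X → Prop) (σ : X → S) (P : X) :
    Set (Set S) :=
  {U | IsOpen U ∧ σ '' {Q | r P Q} ⊆ U}

/-- The geometric unit: `η(P) = (σ(P), St(P), Bl(P))`. -/
def eta {X S : Type*} [TopologicalSpace S] (r : X → X → Prop) (σ : X → S) (P : X) :
    S × Set S × Set (Set S) :=
  (σ P, St r σ P, Bl r σ P)

/-- A flower of the garden `G𝔖 = (O(S), id, S)` of a plot `(𝕊, σ, S)`. -/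
def GFlower {X S : Type*} [TopologicalSpace S] (r : X → X → Prop) (σ : X → S)
    (P : S × Set S × Set (Set S)) : Prop :=
  IsOpen P.2.1 ∧ OFilter P.2.2 ∧ P.1 ∉ liftDia r σ P.2.1 ∧
  ∀ W : Set S, IsOpen W → P.1 ∈ liftBox r σ W → W ∈ P.2.2

/-- The transition relation on flowers of `G𝔖`: `(p,U,F) → (q,V,G)` iff `q ∉ U` and
`q ∈ W` for every `W ∈ F`. -/
def GTrans {S : Type*} [TopologicalSpace S]
    (P Q : S × Set S × Set (Set S)) : Prop :=
  Q.1 ∉ P.2.1 ∧ ∀ W ∈ P.2.2, Q.1 ∈ W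

/-- A healthy set of flowers of `G𝔖`. -/
def GHealthy {X S : Type*} [TopologicalSpace S] (r : X → X → Prop) (σ : X → S)
    (H : Set (S × Set S × Set (Set S))) : Prop :=
  (∀ P ∈ H, GFlower r σ P) ∧
  (∀ P ∈ H, ∀ W : Set S, IsOpen W → W ∉ P.2.2 →
    ∃ Q ∈ H, GTrans P Q ∧ Q.1 ∉ W) ∧
  (∀ P ∈ H, ∀ W : Set S, IsOpen W → ¬ W ⊆ P.2.1 →
    ∃ Q ∈ H, GTrans P Q ∧ Q.1 ∈ W)

/-- The largest healthy set of flowers of `G𝔖`. -/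
def GMaxHealthy {X S : Type*} [TopologicalSpace S] (r : X → X → Prop) (σ : X → S) :
    Set (S × Set S × Set (Set S)) :=
  ⋃₀ {H | GHealthy r σ H}

/-- For each node `P` of a plot, the triple `η(P) = (σ(P), St(P), Bl(P))` is a
flower of the garden `G𝔖 = (O(S), id, S)`. -/
theorem eta_is_flower {X S : Type*} [TopologicalSpace S]
    (r : X → X → Prop) (σ : X → S) (hσ : Function.Surjective σ) :
    ∀ P : X, GFlower r σ (eta r σ P) := by
  intro P
  refine ⟨isClosed_closure.isOpen_compl, ?_, ?_, ?_⟩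
  · refine ⟨fun U hU => hU.1, ⟨univ, isOpen_univ, subset_univ _⟩, ?_, ?_⟩
    · exact fun U hU V hV hUV => ⟨hV, hU.2.trans hUV⟩
    · exact fun U hU V hV => ⟨hU.1.inter hV.1, subset_inter hU.2 hV.2⟩
  · rintro ⟨V, ⟨hVopen, hV⟩, hPV⟩
    obtain ⟨Q, hrQ, hQ⟩ := hV hPV
    exact hQ (subset_closure ⟨Q, hrQ, rfl⟩)
  · rintro W hW ⟨V, ⟨hVopen, hV⟩, hPV⟩
    refine ⟨hW, ?_⟩
    rintro _ ⟨Q, hrQ, rfl⟩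
    exact hV hPV Q hrQ
end Paper
end

section
/- Let (𝕊, σ, S) be a plot and set η(P) = (σ(P), St(P), Bl(P)) for P ∈ 𝕊. Then the set {η(P) | P ∈ 𝕊} is a healthy set of flowers of the garden G𝔖 = (O(S), id, S). -/
open Set

namespace Paper

lemma gtrans_eta {X S : Type*} [TopologicalSpace S] (r : X → X → Prop) (σ : X → S)
    {P Q : X} (h : r P Q) : GTrans (eta r σ P) (eta r σ Q) := by
  refine ⟨fun hmem => hmem (subset_closure (Set.mem_image_of_mem σ h)), ?_⟩
  intro W hW
  exact hW.2 (Set.mem_image_of_mem σ h)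

/-- The set of flowers of the form `η(P)` for `P` a node of the plot is a healthy
set of flowers of the garden `G𝔖 = (O(S), id, S)`. -/
theorem range_eta_healthy {X S : Type*} [TopologicalSpace S]
    (r : X → X → Prop) (σ : X → S) (hσ : Function.Surjective σ) :
    GHealthy r σ (Set.range (eta r σ)) := by
  refine ⟨?_, ?_, ?_⟩
  · rintro _ ⟨P, rfl⟩
    refine ⟨isClosed_closure.isOpen_compl, ⟨fun U hU => hU.1,
      ⟨Set.univ, isOpen_univ, Set.subset_univ _⟩,
      fun U hU V hV hUV => ⟨hV, hU.2.trans hUV⟩,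
      fun U hU V hV => ⟨hU.1.inter hV.1, Set.subset_inter hU.2 hV.2⟩⟩, ?_, ?_⟩
    · rintro ⟨V, ⟨hVopen, hVsub⟩, hPV⟩
      obtain ⟨Q, hrQ, hQ⟩ := hVsub hPV
      exact hQ (subset_closure (Set.mem_image_of_mem σ hrQ))
    · rintro W hW ⟨V, ⟨hVopen, hVsub⟩, hPV⟩
      refine ⟨hW, ?_⟩
      rintro _ ⟨Q, hrQ, rfl⟩
      exact hVsub hPV Q hrQ
  · rintro _ ⟨P, rfl⟩ W hWopen hWnot
    have : ¬ σ '' {Q | r P Q} ⊆ W := fun h => hWnot ⟨hWopen, h⟩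
    obtain ⟨x, ⟨Q, hrQ, rfl⟩, hxW⟩ := Set.not_subset.mp this
    exact ⟨eta r σ Q, Set.mem_range_self Q, gtrans_eta r σ hrQ, hxW⟩
  · rintro _ ⟨P, rfl⟩ W hWopen hWnot
    obtain ⟨x, hxW, hx⟩ := Set.not_subset.mp hWnot
    have hx' : x ∈ closure (σ '' {Q | r P Q}) := not_not.mp hx
    obtain ⟨y, hyW, Q, hrQ, rfl⟩ := mem_closure_iff.mp hx' W hWopen hxW
    exact ⟨eta r σ Q, Set.mem_range_self Q, gtrans_eta r σ hrQ, hyW⟩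
end Paper
end

section
/- Let (𝕊, σ, S) be a plot, set η(P) = (σ(P), St(P), Bl(P)), and let 𝕊̄ be the largest healthy set of flowers of the garden G𝔖 = (O(S), id, S) with the restricted flower transition relation. Then: (↑) for each P ∈ 𝕊 and each transition η(P) → (r, W, H) in 𝕊̄ there exists Q ∈ 𝕊 with P → Q and σ(Q) ≼ r in the specialization preorder of S; and (−) for each P ∈ 𝕊, each transition η(P) → (r, W, H) in 𝕊̄, and each open U ⊆ S with r ∈ U, there exists Q ∈ 𝕊 with P → Q and σ(Q) ∈ U. (That is, η together with the identity on S is a lentile plot map from the plot to the harvest of G𝔖.) -/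
open Set

namespace Paper

/-- The geometric unit `η` (with the identity on `S`) is a lentile plot map from
the plot to the harvest of `G𝔖`: it satisfies the `(↑)`- and `(−)`-conditions with
respect to the largest healthy set of flowers. -/
theorem eta_lentile {X S : Type*} [TopologicalSpace S]
    (r : X → X → Prop) (σ : X → S) (hσ : Function.Surjective σ) :
    ∀ P : X, ∀ R ∈ GMaxHealthy r σ, GTrans (eta r σ P) R →
      (∃ Q : X, r P Q ∧ σ Q ∈ closure {R.1}) ∧
      (∀ U : Set S, IsOpen U → R.1 ∈ U → ∃ Q : X, r P Q ∧ σ Q ∈ U) := by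
  intro P R hR hT
  obtain ⟨hT1, hT2⟩ := hT
  constructor
  · by_contra h
    push_neg at h
    have hW : (closure {R.1})ᶜ ∈ Bl r σ P := by
      refine ⟨isClosed_closure.isOpen_compl, ?_⟩
      rintro x ⟨Q, hQ, rfl⟩
      exact h Q hQ
    exact (hT2 _ hW) (subset_closure rfl)
  · intro U hU hRU
    by_contra h
    push_neg at h
    apply hT1
    have hsub : σ '' {Q | r P Q} ⊆ Uᶜ := by
      rintro x ⟨Q, hQ, rfl⟩
      exact h Q hQ
    have := closure_minimal hsub hU.isClosed_compl
    intro hmem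
    exact this hmem hRU
end Paper
end

section
/- Let (φ, Φ) be a lentile plot map from a plot (𝕊, σ, S) to a plot (𝕋, τ, T). Then for every P ∈ 𝕊 and every open V ⊆ T: τ⁻¹(V) ∩ (Φ(P))^→ ≠ ∅ if and only if σ⁻¹(φ⁻¹(V)) ∩ P^→ ≠ ∅. Equivalently, St(Φ(P)) = φ_*(St(P)), where φ_* is the right adjoint of the inverse-image frame homomorphism φ⁻¹ : O(T) → O(S). -/
open Set

namespace Paper

/-- The saturation of a set: upper section in the specialization order
(`p ≼ q` iff `p ∈ closure {q}`). -/
def sat {S : Type*} [TopologicalSpace S] (E : Set S) : Set S :=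
  {q | ∃ p ∈ E, p ∈ closure {q}}

/-- The lens closure of a set. -/
def lens {S : Type*} [TopologicalSpace S] (E : Set S) : Set S :=
  sat E ∩ closure E

/-- The right adjoint `φ_*` of the inverse-image frame homomorphism
`φ⁻¹ : O(T) → O(S)`: the largest open `V ⊆ T` with `φ⁻¹(V) ⊆ U`. -/
def phiStar {S T : Type*} [TopologicalSpace S] [TopologicalSpace T] (φ : S → T)
    (U : Set S) : Set T :=
  ⋃₀ {V | IsOpen V ∧ φ ⁻¹' V ⊆ U}

/-- For a lentile plot map, `τ⁻¹(V)` meets `(Φ P)^→` iff `σ⁻¹(φ⁻¹(V))` meets `P^→`,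
for every open `V`; equivalently `St(Φ(P)) = φ_*(St(P))`. -/
theorem lentile_stalk {X Y S T : Type*} [TopologicalSpace S] [TopologicalSpace T]
    (rS : X → X → Prop) (rT : Y → Y → Prop)
    (σ : X → S) (τ : Y → T)
    (hσ : Function.Surjective σ) (hτ : Function.Surjective τ)
    (Φ : X → Y) (φ : S → T) (hφ : Continuous φ)
    (hΦ : ∀ P Q, rS P Q → rT (Φ P) (Φ Q))
    (hcomm : ∀ P, φ (σ P) = τ (Φ P))
    (hlen : ∀ P R, rT (Φ P) R → τ R ∈ lens ((φ ∘ σ) '' {Q | rS P Q})) :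
    ∀ P : X,
      (∀ V : Set T, IsOpen V →
        ((τ ⁻¹' V ∩ {R | rT (Φ P) R}).Nonempty ↔
          (σ ⁻¹' (φ ⁻¹' V) ∩ {Q | rS P Q}).Nonempty)) ∧
      St rT τ (Φ P) = phiStar φ (St rS σ P) := by
  intro P
  have key : ∀ V : Set T, IsOpen V →
      ((τ ⁻¹' V ∩ {R | rT (Φ P) R}).Nonempty ↔
        (σ ⁻¹' (φ ⁻¹' V) ∩ {Q | rS P Q}).Nonempty) := by
    intro V hV
    constructor
    · rintro ⟨R, hRV, hR⟩
      have hcl : τ R ∈ closure ((φ ∘ σ) '' {Q | rS P Q}) := (hlen P R hR).2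
      obtain ⟨t, htV, Q, hQ, rfl⟩ := mem_closure_iff.mp hcl V hV hRV
      exact ⟨Q, htV, hQ⟩
    · rintro ⟨Q, hQV, hQ⟩
      refine ⟨Φ Q, ?_, hΦ P Q hQ⟩
      simpa [Set.mem_preimage, ← hcomm Q] using hQV
  refine ⟨key, ?_⟩
  have hkey' : ∀ V : Set T, IsOpen V →
      ((V ∩ τ '' {R | rT (Φ P) R}).Nonempty ↔
        (φ ⁻¹' V ∩ σ '' {Q | rS P Q}).Nonempty) := by
    intro V hV
    rw [Set.inter_comm V, Set.inter_comm (φ ⁻¹' V)]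
    rw [show (τ '' {R | rT (Φ P) R} ∩ V) = τ '' ({R | rT (Φ P) R} ∩ τ ⁻¹' V) by
      rw [Set.image_inter_preimage]]
    rw [show (σ '' {Q | rS P Q} ∩ φ ⁻¹' V) = σ '' ({Q | rS P Q} ∩ σ ⁻¹' (φ ⁻¹' V)) by
      rw [Set.image_inter_preimage]]
    rw [Set.image_nonempty, Set.image_nonempty, Set.inter_comm, Set.inter_comm {Q | rS P Q}]
    exact key V hV
  apply Set.Subset.antisymm
  · intro t ht
    refine ⟨St rT τ (Φ P), ⟨isOpen_compl_iff.mpr isClosed_closure, ?_⟩, ht⟩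
    have hdisj : ¬ (St rT τ (Φ P) ∩ τ '' {R | rT (Φ P) R}).Nonempty := by
      rintro ⟨t, h1, h2⟩
      exact h1 (subset_closure h2)
    have hdisj2 : ¬ (φ ⁻¹' St rT τ (Φ P) ∩ σ '' {Q | rS P Q}).Nonempty := fun h =>
      hdisj ((hkey' _ (isOpen_compl_iff.mpr isClosed_closure)).mpr h)
    intro s hs
    have hsub : σ '' {Q | rS P Q} ⊆ (φ ⁻¹' St rT τ (Φ P))ᶜ := by
      intro x hx hx'
      exact hdisj2 ⟨x, hx', hx⟩
    have hclosed : IsClosed ((φ ⁻¹' St rT τ (Φ P))ᶜ) := by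
      rw [isClosed_compl_iff]
      exact (isOpen_compl_iff.mpr isClosed_closure).preimage hφ
    have := hclosed.closure_subset_iff.mpr hsub
    exact fun hmem => this hmem hs
  · rintro t ⟨V, ⟨hVopen, hVsub⟩, htV⟩
    have hdisj2 : ¬ (φ ⁻¹' V ∩ σ '' {Q | rS P Q}).Nonempty := by
      rintro ⟨s, h1, h2⟩
      exact hVsub h1 (subset_closure h2)
    have hdisj : ¬ (V ∩ τ '' {R | rT (Φ P) R}).Nonempty := fun h =>
      hdisj2 ((hkey' V hVopen).mp h)
    have hsub : τ '' {R | rT (Φ P) R} ⊆ Vᶜ := fun x hx hx' => hdisj ⟨x, hx', hx⟩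
    have := (isClosed_compl_iff.mpr hVopen).closure_subset_iff.mpr hsub
    exact fun hmem => this hmem htV
end Paper
end

section
/- Let (φ, Φ) be a lentile plot map from a plot (𝕊, σ, S) to a plot (𝕋, τ, T). Then for every P ∈ 𝕊 and every open V ⊆ T: (Φ(P))^→ ⊆ τ⁻¹(V) if and only if P^→ ⊆ σ⁻¹(φ⁻¹(V)). Equivalently, V ∈ Bl(Φ(P)) ⟺ φ⁻¹(V) ∈ Bl(P). -/
open Set

namespace Paper

/-- For a lentile plot map, `(Φ P)^→ ⊆ τ⁻¹(V)` iff `P^→ ⊆ σ⁻¹(φ⁻¹(V))` for every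
open `V`; equivalently `V ∈ Bl(Φ(P)) ⟺ φ⁻¹(V) ∈ Bl(P)`. -/
theorem lentile_bloom {X Y S T : Type*} [TopologicalSpace S] [TopologicalSpace T]
    (rS : X → X → Prop) (rT : Y → Y → Prop)
    (σ : X → S) (τ : Y → T)
    (hσ : Function.Surjective σ) (hτ : Function.Surjective τ)
    (Φ : X → Y) (φ : S → T) (hφ : Continuous φ)
    (hΦ : ∀ P Q, rS P Q → rT (Φ P) (Φ Q))
    (hcomm : ∀ P, φ (σ P) = τ (Φ P))
    (hlen : ∀ P R, rT (Φ P) R → τ R ∈ lens ((φ ∘ σ) '' {Q | rS P Q})) :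
    ∀ P : X, ∀ V : Set T, IsOpen V →
      (({R | rT (Φ P) R} ⊆ τ ⁻¹' V) ↔ ({Q | rS P Q} ⊆ σ ⁻¹' (φ ⁻¹' V))) ∧
      (V ∈ Bl rT τ (Φ P) ↔ φ ⁻¹' V ∈ Bl rS σ P) := by
  intro P V hV
  have key : ({R | rT (Φ P) R} ⊆ τ ⁻¹' V) ↔ ({Q | rS P Q} ⊆ σ ⁻¹' (φ ⁻¹' V)) := by
    constructor
    · intro h Q hQ
      have := h (hΦ P Q hQ)
      simpa [hcomm Q] using this
    · intro h R hR
      obtain ⟨⟨p, hpE, hpcl⟩, -⟩ := hlen P R hR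
      obtain ⟨Q, hQ, rfl⟩ := hpE
      have hpV : (φ ∘ σ) Q ∈ V := h hQ
      have : τ R ∈ V := by
        by_contra hc
        have := mem_closure_iff.mp hpcl V hV hpV
        simp only [Set.inter_singleton_nonempty] at this
        exact hc this
      exact this
  refine ⟨key, ?_⟩
  constructor
  · rintro ⟨-, him⟩
    refine ⟨hV.preimage hφ, ?_⟩
    rintro t ⟨Q, hQ, rfl⟩
    exact key.mp (fun R hR => him ⟨R, hR, rfl⟩) hQ
  · rintro ⟨-, him⟩
    refine ⟨hV, ?_⟩
    rintro t ⟨R, hR, rfl⟩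
    exact key.mpr (fun Q hQ => him ⟨Q, hQ, rfl⟩) hR
end Paper
end

section
/- Let (A, α, S) be a garden and let (p, a, F) be a member of the largest healthy set of flowers of (A, α, S). Then α_*(α(a)) = a, and F = {x ∈ A | α(x) ∈ α[F]} (that is, if α(x) = α(y) for some y ∈ F then x ∈ F), where α_* is the right adjoint of α and α[F] the image of F under α. -/
open Set TopologicalSpace

namespace Paper

variable {A : Type*} [Order.Frame A] {S : Type*} [TopologicalSpace S]

/-- For a member `(p, a, F)` of the largest healthy set of flowers of a garden:
the stalk is `α_*α`-closed, `α_*(α(a)) = a`, and the bloom is saturated,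
`F = {x | α(x) ∈ α[F]}`. -/
theorem healthy_flower_closed {A S : Type*} [Order.Frame A] [TopologicalSpace S]
    (bx dm : A → A) (hbed : IsBed bx dm)
    (α : FrameHom A (Opens S)) (hα : Function.Surjective α)
    (p : S) (a : A) (F : Set A)
    (hmem : (p, a, F) ∈ MaxHealthy bx dm α) :
    rAdjO α (α a) = a ∧ F = {x | α x ∈ ⇑α '' F} := by
  obtain ⟨H, hH, hPH⟩ := hmem
  obtain ⟨-, hup, hneg⟩ := hH
  constructor
  · refine le_antisymm (sSup_le fun x hx => ?_) (le_sSup (by simp : a ∈ {x | α x ≤ α a}))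
    by_contra hxa
    obtain ⟨Q, -, ⟨hna, -⟩, hxQ⟩ := hneg (p, a, F) hPH x hxa
    exact hna (hx hxQ)
  · ext x
    simp only [Set.mem_setOf_eq, Set.mem_image]
    refine ⟨fun hx => ⟨x, hx, rfl⟩, ?_⟩
    rintro ⟨y, hyF, hxy⟩
    by_contra hxF
    obtain ⟨Q, -, ⟨-, hFQ⟩, hxQ⟩ := hup (p, a, F) hPH x hxF
    apply hxQ
    show Q.1 ∈ α x
    rw [← hxy]
    exact hFQ hyF
end Paper
end

section
/- Let (A, α, S) be a garden, let 𝕊 be its largest healthy set of flowers with the restricted flower transition relation, and let proj(p, a, F) = p. For each P = (p, a, F) ∈ 𝕊, let St(P) be the complement of the closure of proj[P^→] and Bl(P) = {U ∈ O(S) | proj[P^→] ⊆ U}, where P^→ is the set of successors of P within 𝕊. Then St(P) = α(a), and Bl(P) = α[F] (that is, for every open U ⊆ S: U ∈ Bl(P) if and only if U = α(x) for some x ∈ F). -/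
open Set TopologicalSpace

namespace Paper

variable {A : Type*} [Order.Frame A] {S : Type*} [TopologicalSpace S]

/-- For a member `P = (p, a, F)` of the largest healthy set `𝕊` of flowers of a
garden, with successors taken within `𝕊` and `proj(q,b,G) = q`:
`St(P) = α(a)` and `Bl(P) = α[F]`. -/
theorem healthy_flower_stalk_bloom {A S : Type*} [Order.Frame A] [TopologicalSpace S]
    (bx dm : A → A) (hbed : IsBed bx dm)
    (α : FrameHom A (Opens S)) (hα : Function.Surjective α)
    (p : S) (a : A) (F : Set A)
    (hmem : (p, a, F) ∈ MaxHealthy bx dm α) :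
    (closure (Prod.fst ''
        {Q | Q ∈ MaxHealthy bx dm α ∧ FTrans α (p, a, F) Q}))ᶜ = (α a : Set S) ∧
    (∀ U : Set S, IsOpen U →
      ((Prod.fst '' {Q | Q ∈ MaxHealthy bx dm α ∧ FTrans α (p, a, F) Q} ⊆ U) ↔
        ∃ x ∈ F, (α x : Set S) = U)) := by
  obtain ⟨H, hH, hPH⟩ := hmem
  have hHsub : H ⊆ MaxHealthy bx dm α := fun Q hQ => ⟨H, hH, hQ⟩
  obtain ⟨hfl, hup, hminus⟩ := hH
  set T : Set S := Prod.fst '' {Q | Q ∈ MaxHealthy bx dm α ∧ FTrans α (p, a, F) Q} with hT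
  have hTa : T ⊆ (α a : Set S)ᶜ := by
    rintro q ⟨Q, ⟨_, hna, _⟩, rfl⟩
    exact hna
  constructor
  · apply subset_antisymm
    · intro q hq
      by_contra hqa
      rw [Set.mem_compl_iff, mem_closure_iff] at hq
      push_neg at hq
      obtain ⟨U, hU, hqU, hUT⟩ := hq
      obtain ⟨x, hx⟩ := hα ⟨U, hU⟩
      have hxa : ¬ x ≤ a := by
        intro hle
        exact hqa ((show (α x : Set S) ⊆ (α a : Set S) from
          (OrderHomClass.mono α hle)) (by rw [hx]; exact hqU))
      obtain ⟨Q, hQH, htr, hxQ⟩ := hminus (p, a, F) hPH x hxa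
      have hQT : Q.1 ∈ T := ⟨Q, ⟨hHsub hQH, htr⟩, rfl⟩
      have : Q.1 ∈ U := by
        have : Q.1 ∈ α x := hxQ
        rwa [hx] at this
      exact absurd hUT (Set.nonempty_iff_ne_empty.mp ⟨Q.1, this, hQT⟩)
    · intro q hq
      have : closure T ⊆ (α a : Set S)ᶜ :=
        closure_minimal hTa (isClosed_compl_iff.mpr (α a).isOpen)
      exact fun hc => (this hc) hq
  · intro U hU
    constructor
    · intro hsub
      set y : A := sSup {z | α z ≤ ⟨U, hU⟩} with hy
      have hαy : α y = ⟨U, hU⟩ := by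
        apply le_antisymm
        · rw [hy, map_sSup]
          exact sSup_le (by rintro v ⟨z, hz, rfl⟩; exact hz)
        · obtain ⟨z, hz⟩ := hα ⟨U, hU⟩
          calc (⟨U, hU⟩ : Opens S) = α z := hz.symm
            _ ≤ α y := OrderHomClass.mono α (le_sSup (by simp [hz]))
      have hyF : y ∈ F := by
        by_contra hyF
        obtain ⟨Q, hQH, htr, hyQ⟩ := hup (p, a, F) hPH y hyF
        have hQT : Q.1 ∈ T := ⟨Q, ⟨hHsub hQH, htr⟩, rfl⟩
        have : Q.1 ∈ α y := by rw [hαy]; exact hsub hQT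
        exact hyQ this
      exact ⟨y, hyF, by rw [hαy]; rfl⟩
    · rintro ⟨x, hxF, rfl⟩
      rintro q ⟨Q, ⟨_, _, hFQ⟩, rfl⟩
      exact hFQ hxF
end Paper
end

section
/- Let (𝕊, σ, S) be a plot, let G𝔖 = (O(S), id, S) be its garden with lifted operators □_σ, ◇_σ, let 𝕊̄ be the largest healthy set of flowers of G𝔖 with the restricted flower transition relation and projection proj(p, U, F) = p, and let □_σ̄, ◇_σ̄ be the operators on O(S) lifted along proj from the transition structure 𝕊̄. Then □_σ̄ = □_σ and ◇_σ̄ = ◇_σ (so the garden of the harvest of G𝔖 is exactly G𝔖). -/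
open Set

namespace Paper

section Aux
variable {X S : Type*} [TopologicalSpace S] {r : X → X → Prop} {σ : X → S}

lemma eta_flower (P : X) : GFlower r σ (eta r σ P) := by
  refine ⟨isClosed_closure.isOpen_compl, ⟨fun U hU => hU.1, ⟨Set.univ, isOpen_univ, Set.subset_univ _⟩,
    fun U hU V hV hUV => ⟨hV, hU.2.trans hUV⟩,
    fun U hU V hV => ⟨hU.1.inter hV.1, Set.subset_inter hU.2 hV.2⟩⟩, ?_, ?_⟩
  · rintro ⟨V, ⟨hVo, hVsub⟩, hpV⟩
    obtain ⟨Q, hPQ, hQ⟩ := hVsub hpV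
    exact hQ (subset_closure ⟨Q, hPQ, rfl⟩)
  · rintro W hW ⟨V, ⟨hVo, hVsub⟩, hpV⟩
    refine ⟨hW, ?_⟩
    rintro _ ⟨Q, hQ, rfl⟩
    exact hVsub hpV Q hQ

lemma eta_trans {P Q : X} (h : r P Q) : GTrans (eta r σ P) (eta r σ Q) :=
  ⟨fun hc => hc (subset_closure ⟨Q, h, rfl⟩), fun W hW => hW.2 ⟨Q, h, rfl⟩⟩

lemma eta_range_healthy : GHealthy r σ (Set.range (eta r σ)) := by
  refine ⟨?_, ?_, ?_⟩
  · rintro _ ⟨P, rfl⟩; exact eta_flower P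
  · rintro _ ⟨P, rfl⟩ W hWo hW
    have : ¬ σ '' {Q | r P Q} ⊆ W := fun hs => hW ⟨hWo, hs⟩
    obtain ⟨_, ⟨Q, hQ, rfl⟩, hnW⟩ := Set.not_subset.mp this
    exact ⟨eta r σ Q, ⟨Q, rfl⟩, eta_trans hQ, hnW⟩
  · rintro _ ⟨P, rfl⟩ W hWo hW
    obtain ⟨q, hqW, hqc⟩ := Set.not_subset.mp hW
    have hqcl : q ∈ closure (σ '' {Q | r P Q}) := not_not.mp hqc
    obtain ⟨_, hxW, Q, hQ, rfl⟩ := (mem_closure_iff.mp hqcl) W hWo hqW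
    exact ⟨eta r σ Q, ⟨Q, rfl⟩, eta_trans hQ, hxW⟩

lemma eta_mem (P : X) : eta r σ P ∈ GMaxHealthy r σ :=
  ⟨Set.range (eta r σ), eta_range_healthy, ⟨P, rfl⟩⟩

lemma maxHealthy_flower {x} (hx : x ∈ GMaxHealthy r σ) : GFlower r σ x := by
  obtain ⟨H, hH, hxH⟩ := hx; exact hH.1 x hxH

lemma maxHealthy_minus {x} (hx : x ∈ GMaxHealthy r σ) {W : Set S} (hWo : IsOpen W)
    (hW : ¬ W ⊆ x.2.1) : ∃ y ∈ GMaxHealthy r σ, GTrans x y ∧ y.1 ∈ W := by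
  obtain ⟨H, hH, hxH⟩ := hx
  obtain ⟨y, hyH, hT, hyW⟩ := hH.2.2 x hxH W hWo hW
  exact ⟨y, ⟨H, hH, hyH⟩, hT, hyW⟩

end Aux

/-- The garden of the harvest of `G𝔖` is exactly `G𝔖`: the operators on `O(S)`
lifted along the projection from the largest healthy set `𝕊̄` of flowers of `G𝔖`
agree with the operators lifted along `σ` from the original plot. -/
theorem harvest_garden_eq {X S : Type*} [TopologicalSpace S]
    (r : X → X → Prop) (σ : X → S) (hσ : Function.Surjective σ) :
    ∀ U : Set S, IsOpen U →
      (liftBox (fun P Q : ↥(GMaxHealthy r σ) => GTrans P.1 Q.1)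
          (fun P : ↥(GMaxHealthy r σ) => P.1.1) U = liftBox r σ U) ∧
      (liftDia (fun P Q : ↥(GMaxHealthy r σ) => GTrans P.1 Q.1)
          (fun P : ↥(GMaxHealthy r σ) => P.1.1) U = liftDia r σ U) := by
  intro U hU
  constructor
  · ext p
    constructor
    · rintro ⟨V, ⟨hVo, hVsub⟩, hpV⟩
      refine ⟨V, ⟨hVo, ?_⟩, hpV⟩
      intro P hPV Q hPQ
      have h1 : (⟨eta r σ P, eta_mem P⟩ : ↥(GMaxHealthy r σ)) ∈
          (fun P : ↥(GMaxHealthy r σ) => P.1.1) ⁻¹' V := hPV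
      exact hVsub h1 ⟨eta r σ Q, eta_mem Q⟩ (eta_trans hPQ)
    · rintro ⟨V, ⟨hVo, hVsub⟩, hpV⟩
      refine ⟨V, ⟨hVo, ?_⟩, hpV⟩
      rintro ⟨x, hx⟩ hxV ⟨y, hy⟩ hT
      have hflx := maxHealthy_flower hx
      have hUmem : U ∈ x.2.2 := hflx.2.2.2 U hU ⟨V, ⟨hVo, hVsub⟩, hxV⟩
      exact hT.2 U hUmem
  · ext p
    constructor
    · rintro ⟨V, ⟨hVo, hVsub⟩, hpV⟩
      refine ⟨V, ⟨hVo, ?_⟩, hpV⟩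
      intro P hPV
      obtain ⟨⟨y, hy⟩, hT, hyU⟩ := hVsub (show ((⟨eta r σ P, eta_mem P⟩ : ↥(GMaxHealthy r σ))) ∈ _ from hPV)
      have hycl : y.1 ∈ closure (σ '' {Q | r P Q}) := not_not.mp hT.1
      obtain ⟨_, hxU, Q, hQ, rfl⟩ := (mem_closure_iff.mp hycl) U hU hyU
      exact ⟨Q, hQ, hxU⟩
    · rintro ⟨V, ⟨hVo, hVsub⟩, hpV⟩
      refine ⟨V, ⟨hVo, ?_⟩, hpV⟩
      rintro ⟨x, hx⟩ hxV
      have hflx := maxHealthy_flower hx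
      have hnsub : ¬ U ⊆ x.2.1 := by
        intro hsub
        exact hflx.2.2.1 ⟨V, ⟨hVo, fun z hz => by
          obtain ⟨Q, hQ, hQU⟩ := hVsub hz
          exact ⟨Q, hQ, hsub hQU⟩⟩, hxV⟩
      obtain ⟨y, hy, hT, hyU⟩ := maxHealthy_minus hx hU hnsub
      exact ⟨⟨y, hy⟩, hT, hyU⟩
end Paper
end
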